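/- arXiv:2605.23182 — 6 statements merged into one kernel-verified Lean document; each statement's English description precedes it below -/
import Mathlib

section
/- Let X be a Bernoulli random variable with parameter p, where p, q ∈ (1/4, 3/4). Define Z = X·log(p/q) + (1−X)·log((1−p)/(1−q)) − (p·log(p/q) + (1−p)·log((1−p)/(1−q))). Then Z is 8(p−q)²-subgaussian: for every λ ∈ ℝ, E[exp(λZ)] ≤ exp(4λ²(p−q)²). -/
/-!
Writing `logOdds x = log x - log (1 - x)`, the variable is `Z = c (X - p)` with
`c = logOdds p - logOdds q`. Hoeffding's lemma makes `X - p` a `1/4`-subgaussian variable, so `Z`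
is `c²/4`-subgaussian. On `[1/4, 3/4]` the derivative `1 / (x (1 - x))` of `logOdds` is at most
`16/3`, hence `c² ≤ (256/9) (p - q)²` and `c² λ² / 8 ≤ 4 λ² (p - q)²`.
-/

open MeasureTheory ProbabilityTheory Real

lemma integral_eq_measureReal_of_forall_eq_zero_or_one {Ω : Type*} [MeasurableSpace Ω]
    {μ : Measure Ω} {X : Ω → ℝ} (hX : Measurable X) (hX01 : ∀ ω, X ω = 0 ∨ X ω = 1) :
    μ[X] = μ.real {ω | X ω = 1} := by
  have hX_eq : X = {ω | X ω = 1}.indicator 1 := by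
    funext ω
    rcases hX01 ω with h | h <;> simp [h]
  calc μ[X] = ∫ ω, {ω | X ω = 1}.indicator 1 ω ∂μ := by rw [← hX_eq]
    _ = μ.real {ω | X ω = 1} := integral_indicator_one (hX (measurableSet_singleton 1))

lemma hasSubgaussianMGF_sub_integral_of_forall_eq_zero_or_one {Ω : Type*} [MeasurableSpace Ω]
    {μ : Measure Ω} [IsProbabilityMeasure μ] {X : Ω → ℝ} (hX : AEMeasurable X μ)
    (hX01 : ∀ ω, X ω = 0 ∨ X ω = 1) :
    HasSubgaussianMGF (fun ω ↦ X ω - μ[X]) (1 / 4) μ := by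
  have hX_mem : ∀ᵐ ω ∂μ, X ω ∈ Set.Icc (0 : ℝ) 1 :=
    ae_of_all _ fun ω ↦ by rcases hX01 ω with h | h <;> simp [h]
  convert hasSubgaussianMGF_of_mem_Icc hX hX_mem
  ext
  norm_num

noncomputable def logOdds (x : ℝ) : ℝ := log x - log (1 - x)

lemma hasDerivAt_logOdds {x : ℝ} (hx₀ : 0 < x) (hx₁ : x < 1) :
    HasDerivAt logOdds (x⁻¹ + (1 - x)⁻¹) x := by
  have h := (hasDerivAt_log hx₀.ne').sub ((hasDerivAt_log (sub_pos.2 hx₁).ne').comp x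
    ((hasDerivAt_id x).const_sub 1))
  exact h.congr_deriv (by ring)

lemma abs_logOdds_sub_le {p q : ℝ} (hp : p ∈ Set.Icc (1 / 4 : ℝ) (3 / 4))
    (hq : q ∈ Set.Icc (1 / 4 : ℝ) (3 / 4)) :
    |logOdds p - logOdds q| ≤ 16 / 3 * |p - q| := by
  have hderiv_le : ∀ x ∈ Set.Icc (1 / 4 : ℝ) (3 / 4), ‖x⁻¹ + (1 - x)⁻¹‖ ≤ 16 / 3 := by
    rintro x ⟨hx₁, hx₂⟩
    have hx₀ : 0 < x := by linarith
    have hx₁' : 0 < 1 - x := by linarith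
    have hx : x⁻¹ + (1 - x)⁻¹ = (x * (1 - x))⁻¹ := by
      field_simp
      ring
    rw [hx, Real.norm_eq_abs, abs_of_pos (by positivity), inv_le_comm₀ (by positivity) (by norm_num)]
    nlinarith
  exact (convex_Icc _ _).norm_image_sub_le_of_norm_hasDerivWithin_le
    (fun x hx ↦ (hasDerivAt_logOdds (by linarith [hx.1]) (by linarith [hx.2])).hasDerivWithinAt)
    hderiv_le hq hp

/-- If `X` is Bernoulli(p) with `p, q ∈ (1/4, 3/4)`, then the centered
realized log-likelihood ratio `Z` is `8(p−q)²`-subgaussian: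
`E[exp(λZ)] ≤ exp(4λ²(p−q)²)` for all `λ`. -/
theorem stmt_0 {Ω : Type*} [MeasurableSpace Ω] (μ : Measure Ω) [IsProbabilityMeasure μ]
    (p q : ℝ) (hp : p ∈ Set.Ioo (1/4 : ℝ) (3/4)) (hq : q ∈ Set.Ioo (1/4 : ℝ) (3/4))
    (X : Ω → ℝ) (hXmeas : Measurable X)
    (hX01 : ∀ ω, X ω = 0 ∨ X ω = 1)
    (hXp : μ {ω | X ω = 1} = ENNReal.ofReal p)
    (Z : Ω → ℝ)
    (hZ : ∀ ω, Z ω = X ω * Real.log (p / q) + (1 - X ω) * Real.log ((1 - p) / (1 - q))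
        - (p * Real.log (p / q) + (1 - p) * Real.log ((1 - p) / (1 - q)))) :
    ∀ l : ℝ, ∫ ω, Real.exp (l * Z ω) ∂μ ≤ Real.exp (4 * l ^ 2 * (p - q) ^ 2) := by
  intro l
  obtain ⟨hp₁, hp₂⟩ := hp
  obtain ⟨hq₁, hq₂⟩ := hq
  have hmean : μ[X] = p := by
    rw [integral_eq_measureReal_of_forall_eq_zero_or_one hXmeas hX01, measureReal_def, hXp,
      ENNReal.toReal_ofReal (by linarith)]
  set c := logOdds p - logOdds q
  have hZ_eq : Z = fun ω ↦ c * (X ω - μ[X]) := by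
    funext ω
    rw [hZ ω, hmean, log_div (by linarith) (by linarith), log_div (by linarith) (by linarith)]
    simp only [c, logOdds]
    ring
  have hc : c ^ 2 ≤ 256 / 9 * (p - q) ^ 2 := by
    have h := abs_logOdds_sub_le ⟨hp₁.le, hp₂.le⟩ ⟨hq₁.le, hq₂.le⟩
    calc c ^ 2 = |c| ^ 2 := (sq_abs c).symm
      _ ≤ (16 / 3 * |p - q|) ^ 2 := by gcongr
      _ = 256 / 9 * (p - q) ^ 2 := by rw [mul_pow, sq_abs]; norm_num
  have hsub : HasSubgaussianMGF (fun ω ↦ X ω - μ[X]) (1 / 4) μ :=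
    hasSubgaussianMGF_sub_integral_of_forall_eq_zero_or_one hXmeas.aemeasurable hX01
  calc ∫ ω, exp (l * Z ω) ∂μ = mgf Z μ l := rfl
    _ ≤ exp (c ^ 2 * (1 / 4) * l ^ 2 / 2) := by
      rw [hZ_eq]
      exact (hsub.const_mul c).mgf_le l
    _ ≤ exp (4 * l ^ 2 * (p - q) ^ 2) := by
      gcongr
      nlinarith [mul_le_mul_of_nonneg_left hc (sq_nonneg l)]
end

section
/- For all x, y with 1/4 < x < 3/4 and 1/4 < y < 3/4, the Bernoulli KL divergence satisfies kl(x, y) ≤ 3(x−y)². -/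
private lemma stmt1_hder (x t : ℝ) (ht : t ≠ 0) (h1t : (1:ℝ) - t ≠ 0) :
    HasDerivAt (fun s => x * (Real.log x - Real.log s) +
      (1 - x) * (Real.log (1 - x) - Real.log (1 - s)) - 3 * (x - s) ^ 2)
      ((x - t) * (6 - 1 / (t * (1 - t)))) t := by
  have h1 : HasDerivAt (fun s : ℝ => Real.log s) t⁻¹ t := Real.hasDerivAt_log ht
  have h2 : HasDerivAt (fun s : ℝ => (1 : ℝ) - s) (-1) t := by
    simpa using (hasDerivAt_id t).const_sub 1
  have h3 : HasDerivAt (fun s : ℝ => Real.log (1 - s)) ((1 - t)⁻¹ * (-1)) t :=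
    (Real.hasDerivAt_log h1t).comp t h2
  have h4 : HasDerivAt (fun s : ℝ => x - s) (-1) t := by
    simpa using (hasDerivAt_id t).const_sub x
  have h5 : HasDerivAt (fun s : ℝ => (x - s) ^ 2) (2 * (x - t) ^ 1 * (-1)) t := h4.pow 2
  have h6 : HasDerivAt (fun s => x * (Real.log x - Real.log s) +
      (1 - x) * (Real.log (1 - x) - Real.log (1 - s)) - 3 * (x - s) ^ 2)
      (x * (0 - t⁻¹) + (1 - x) * (0 - (1 - t)⁻¹ * (-1)) - 3 * (2 * (x - t) ^ 1 * (-1))) t :=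
    ((((hasDerivAt_const t (Real.log x)).sub h1).const_mul x).add
      (((hasDerivAt_const t (Real.log (1 - x))).sub h3).const_mul (1 - x))).sub
      (h5.const_mul 3)
  convert h6 using 1
  field_simp
  ring

/-- For `x, y ∈ (1/4, 3/4)` the Bernoulli KL divergence satisfies
`kl(x,y) ≤ 3(x−y)²`. -/
theorem stmt_1 (x y : ℝ) (hx1 : 1/4 < x) (hx2 : x < 3/4) (hy1 : 1/4 < y) (hy2 : y < 3/4) :
    x * Real.log (x / y) + (1 - x) * Real.log ((1 - x) / (1 - y)) ≤ 3 * (x - y) ^ 2 := by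
  have hx0 : (0:ℝ) < x := by linarith
  have hy0 : (0:ℝ) < y := by linarith
  have h1x : (0:ℝ) < 1 - x := by linarith
  have h1y : (0:ℝ) < 1 - y := by linarith
  set f : ℝ → ℝ := fun s => x * (Real.log x - Real.log s) +
      (1 - x) * (Real.log (1 - x) - Real.log (1 - s)) - 3 * (x - s) ^ 2 with hf
  have hfx : f x = 0 := by simp [hf]
  -- key: f y ≤ 0
  have key : f y ≤ 0 := by
    have hderiv : ∀ t ∈ Set.Ioo (1/4 : ℝ) (3/4), deriv f t = (x - t) * (6 - 1 / (t * (1 - t))) := by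
      intro t ht
      exact (stmt1_hder x t (by linarith [ht.1]) (by simp only [Set.mem_Ioo] at ht; linarith [ht.2])).deriv
    have hcont : ∀ t ∈ Set.Ioo (1/4 : ℝ) (3/4), DifferentiableAt ℝ f t := by
      intro t ht
      exact (stmt1_hder x t (by linarith [ht.1]) (by simp only [Set.mem_Ioo] at ht; linarith [ht.2])).differentiableAt
    have hfac : ∀ t ∈ Set.Ioo (1/4 : ℝ) (3/4), (0:ℝ) ≤ 6 - 1 / (t * (1 - t)) := by
      intro t ht
      obtain ⟨ht1, ht2⟩ := ht
      have h : (3:ℝ)/16 ≤ t * (1 - t) := by nlinarith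
      have hpos : (0:ℝ) < t * (1 - t) := by nlinarith
      have : 1 / (t * (1 - t)) ≤ 16/3 := by
        rw [div_le_iff₀ hpos]; nlinarith
      linarith
    rcases le_or_gt y x with hle | hlt
    · -- y ≤ x : f monotone on [y, x]
      have hmono : MonotoneOn f (Set.Icc y x) := by
        apply monotoneOn_of_deriv_nonneg (convex_Icc y x)
        · exact fun t ht => (hcont t ⟨by linarith [ht.1], by linarith [ht.2]⟩).continuousAt.continuousWithinAt
        · intro t ht
          rw [interior_Icc] at ht
          exact (hcont t ⟨by linarith [ht.1], by linarith [ht.2]⟩).differentiableWithinAt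
        · intro t ht
          rw [interior_Icc] at ht
          have ht' : t ∈ Set.Ioo (1/4 : ℝ) (3/4) := ⟨by linarith [ht.1], by linarith [ht.2]⟩
          rw [hderiv t ht']
          have := hfac t ht'
          nlinarith [ht.2]
      have := hmono ⟨le_refl y, hle⟩ ⟨hle, le_refl x⟩ hle
      rw [hfx] at this; exact this
    · -- x < y : f antitone on [x, y]
      have hanti : AntitoneOn f (Set.Icc x y) := by
        apply antitoneOn_of_deriv_nonpos (convex_Icc x y)
        · exact fun t ht => (hcont t ⟨by linarith [ht.1], by linarith [ht.2]⟩).continuousAt.continuousWithinAt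
        · intro t ht
          rw [interior_Icc] at ht
          exact (hcont t ⟨by linarith [ht.1], by linarith [ht.2]⟩).differentiableWithinAt
        · intro t ht
          rw [interior_Icc] at ht
          have ht' : t ∈ Set.Ioo (1/4 : ℝ) (3/4) := ⟨by linarith [ht.1], by linarith [ht.2]⟩
          rw [hderiv t ht']
          have := hfac t ht'
          nlinarith [ht.1]
      have := hanti ⟨le_refl x, hlt.le⟩ ⟨hlt.le, le_refl y⟩ hlt.le
      rw [hfx] at this; exact this
  have hlog1 : Real.log (x / y) = Real.log x - Real.log y := Real.log_div hx0.ne' hy0.ne'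
  have hlog2 : Real.log ((1 - x) / (1 - y)) = Real.log (1 - x) - Real.log (1 - y) :=
    Real.log_div h1x.ne' h1y.ne'
  rw [hlog1, hlog2]
  have : f y = x * (Real.log x - Real.log y) +
      (1 - x) * (Real.log (1 - x) - Real.log (1 - y)) - 3 * (x - y) ^ 2 := rfl
  linarith [key, this ▸ key]
end

section
/- Let b ≥ a ≥ 2 be real numbers. If x > 0 satisfies x ≤ b + a·log x, then x < b + 3a·log b. -/
/-- If `b ≥ a ≥ 2` and `x > 0` satisfies `x ≤ b + a·log x`,
then `x < b + 3a·log b`. -/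
theorem stmt_3 (a b x : ℝ) (ha : 2 ≤ a) (hab : a ≤ b) (hx : 0 < x)
    (h : x ≤ b + a * Real.log x) : x < b + 3 * a * Real.log b := by
  have hb2 : (2:ℝ) ≤ b := le_trans ha hab
  have hb0 : 0 < b := by linarith
  have ha0 : 0 < a := by linarith
  have hlogb : 0 < Real.log b := Real.log_pos (by linarith)
  by_contra hcon
  push_neg at hcon
  set M := b + 3 * a * Real.log b with hMdef
  have hMb : b ≤ M := by nlinarith
  have hMpos : 0 < M := lt_of_lt_of_le hb0 hMb
  have haM : a ≤ M := le_trans hab hMb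
  have hMx : M ≤ x := hcon
  have hlog : Real.log x - Real.log M ≤ x / M - 1 := by
    rw [← Real.log_div (ne_of_gt hx) (ne_of_gt hMpos)]
    exact Real.log_le_sub_one_of_pos (div_pos hx hMpos)
  have h2 : a * (x / M - 1) ≤ x - M := by
    have hx1 : x / M - 1 = (x - M) / M := by field_simp
    rw [hx1, ← mul_div_assoc, div_le_iff₀ hMpos]
    nlinarith
  have key : a * Real.log x ≤ a * Real.log M + (x - M) := by
    have h1 : a * (Real.log x - Real.log M) ≤ a * (x / M - 1) :=
      mul_le_mul_of_nonneg_left hlog (le_of_lt ha0)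
    nlinarith
  have hMle : M ≤ b + a * Real.log M := by nlinarith
  have h3 : 3 * Real.log b ≤ Real.log M := by
    have : a * (3 * Real.log b) ≤ a * Real.log M := by nlinarith
    exact le_of_mul_le_mul_left this ha0
  have h4 : Real.log (b ^ 3) ≤ Real.log M := by
    rw [Real.log_pow]; push_cast; linarith
  have h5 : b ^ 3 ≤ M := by
    have := Real.exp_le_exp.mpr h4
    rwa [Real.exp_log (pow_pos hb0 3), Real.exp_log hMpos] at this
  have h6 : Real.log b < b - 1 :=
    Real.log_lt_sub_one_of_pos hb0 (by linarith)
  nlinarith [mul_le_mul_of_nonneg_right hab (le_of_lt hlogb),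
    mul_le_mul_of_nonneg_left h6.le hb0.le]
end

section
/- Let n be a positive integer, M ≥ 0, and z_1, …, z_n ∈ [0,1]. Then Σ_{k=1}^n z_k / sqrt( max{ M + Σ_{i=1}^{k−1} z_i , 1 } ) ≤ (√2 + 1) · sqrt( Σ_{i=1}^n z_i ). -/
/-! Adding `M` only enlarges the denominators, so take `M = 0`. With `T = Σ_{i<k} z_i`, each
term `w / √(max T 1)` (`w = z_k`) is at most `(√2 + 1)(√(T + w) - √T)`: write
`w = (√(T + w) - √T)(√(T + w) + √T)` and use `w ≤ 1` to bound the second factor by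
`(√2 + 1)·√(max T 1)`. Summing telescopes. -/

open Finset Real

lemma sqrt_add_add_sqrt_le_mul_sqrt_max_one {T w : ℝ} (hw1 : w ≤ 1) :
    √(T + w) + √T ≤ (√2 + 1) * √(max T 1) := by
  have hT : √T ≤ √(max T 1) := sqrt_le_sqrt (le_max_left T 1)
  have hTw : √(T + w) ≤ √2 * √(max T 1) := by
    rw [← sqrt_mul zero_le_two]
    exact sqrt_le_sqrt (by linarith [le_max_left T 1, le_max_right T 1])
  linarith

lemma div_sqrt_max_one_le_mul_sqrt_add_sub_sqrt {T w : ℝ} (hT : 0 ≤ T) (hw0 : 0 ≤ w)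
    (hw1 : w ≤ 1) : w / √(max T 1) ≤ (√2 + 1) * (√(T + w) - √T) := by
  have hmax : 0 < √(max T 1) := sqrt_pos.2 (lt_max_of_lt_right one_pos)
  have hconj : (√(T + w) - √T) * (√(T + w) + √T) = w := by
    linear_combination sq_sqrt (show 0 ≤ T + w by linarith) - sq_sqrt hT
  have hdiff : 0 ≤ √(T + w) - √T := sub_nonneg.2 (sqrt_le_sqrt (by linarith))
  rw [div_le_iff₀ hmax]
  calc w = (√(T + w) - √T) * (√(T + w) + √T) := hconj.symm
    _ ≤ (√(T + w) - √T) * ((√2 + 1) * √(max T 1)) :=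
      mul_le_mul_of_nonneg_left (sqrt_add_add_sqrt_le_mul_sqrt_max_one hw1) hdiff
    _ = (√2 + 1) * (√(T + w) - √T) * √(max T 1) := by ring

lemma sum_div_sqrt_max_partial_sum_le {z : ℕ → ℝ} (hz0 : ∀ k, 0 ≤ z k) (hz1 : ∀ k, z k ≤ 1)
    (n : ℕ) :
    ∑ k ∈ range n, z k / √(max (∑ i ∈ range k, z i) 1) ≤ (√2 + 1) * √(∑ i ∈ range n, z i) := by
  induction n with
  | zero => simp
  | succ n ih =>
    have hstep := div_sqrt_max_one_le_mul_sqrt_add_sub_sqrt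
      (sum_nonneg fun i (_ : i ∈ range n) => hz0 i) (hz0 n) (hz1 n)
    rw [sum_range_succ, sum_range_succ z n]
    linarith

theorem stmt_6_general (n : ℕ) (M : ℝ) (hM : 0 ≤ M) (z : ℕ → ℝ)
    (hz0 : ∀ k, 0 ≤ z k) (hz1 : ∀ k, z k ≤ 1) :
    ∑ k ∈ Finset.range n, z k / Real.sqrt (max (M + ∑ i ∈ Finset.range k, z i) 1)
      ≤ (Real.sqrt 2 + 1) * Real.sqrt (∑ i ∈ Finset.range n, z i) := by
  refine le_trans (sum_le_sum fun k _ => ?_) (sum_div_sqrt_max_partial_sum_le hz0 hz1 n)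
  have hmax : 0 < √(max (∑ i ∈ range k, z i) 1) := sqrt_pos.2 (lt_max_of_lt_right one_pos)
  exact div_le_div_of_nonneg_left (hz0 k) hmax
    (sqrt_le_sqrt (max_le_max_right 1 (le_add_of_nonneg_left hM)))

/-- For `z_1, …, z_n ∈ [0,1]` (indexed `z 0, …, z (n−1)` here) and `M ≥ 0`,
`Σ_k z_k / sqrt(max{M + Σ_{i<k} z_i, 1}) ≤ (√2 + 1)·sqrt(Σ_i z_i)`. -/
theorem stmt_6 (n : ℕ) (hn : 0 < n) (M : ℝ) (hM : 0 ≤ M) (z : ℕ → ℝ)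
    (hz0 : ∀ k, 0 ≤ z k) (hz1 : ∀ k, z k ≤ 1) :
    ∑ k ∈ Finset.range n, z k / Real.sqrt (max (M + ∑ i ∈ Finset.range k, z i) 1)
      ≤ (Real.sqrt 2 + 1) * Real.sqrt (∑ i ∈ Finset.range n, z i) :=
  stmt_6_general n M hM z hz0 hz1
end

section
/- For any Δ ∈ (0,1], K ≥ 2, δ ∈ (0, 1/2], C ≥ 1, and any real t: if t > 28C²·log(2K/δ)/Δ² + 16C²·log(log(24C²/Δ²))/Δ², then C·sqrt( 4·log( 2K·(log₂(2t))² / δ ) / t ) < Δ. -/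
/-- Tangent-line bound for the logarithm: `log x ≤ x/a + log a - 1`. -/
lemma log_tangent_aux (x a : ℝ) (hx : 0 < x) (ha : 0 < a) :
    Real.log x ≤ x / a + Real.log a - 1 := by
  have h := Real.log_le_sub_one_of_pos (div_pos hx ha)
  rw [Real.log_div (ne_of_gt hx) (ne_of_gt ha)] at h
  linarith

set_option maxHeartbeats 1600000 in
/-- For `Δ ∈ (0,1]`, `K ≥ 2`, `δ ∈ (0,1/2]`, `C ≥ 1` and real `t`:
if `t > 28C²log(2K/δ)/Δ² + 16C²·log(log(24C²/Δ²))/Δ²` then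
`C·sqrt(4·log(2K(log₂ 2t)²/δ)/t) < Δ`. -/
theorem stmt_7 (Δ K δ C t : ℝ) (hΔ1 : 0 < Δ) (hΔ2 : Δ ≤ 1) (hK : 2 ≤ K)
    (hδ1 : 0 < δ) (hδ2 : δ ≤ 1/2) (hC : 1 ≤ C)
    (ht : 28 * C ^ 2 * Real.log (2 * K / δ) / Δ ^ 2
        + 16 * C ^ 2 * Real.log (Real.log (24 * C ^ 2 / Δ ^ 2)) / Δ ^ 2 < t) :
    C * Real.sqrt (4 * Real.log (2 * K * (Real.logb 2 (2 * t)) ^ 2 / δ) / t) < Δ := by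
  have hlog2 := Real.log_two_gt_d9
  have hexp1 := Real.exp_one_lt_d9
  have hexp2 : Real.exp 2 < 7.39 := by
    rw [show (2:ℝ) = 1 + 1 by norm_num, Real.exp_add]
    nlinarith [Real.exp_pos 1]
  have hΔsq : 0 < Δ ^ 2 := by positivity
  have hΔsq1 : Δ ^ 2 ≤ 1 := by nlinarith
  have hCsq1 : (1:ℝ) ≤ C ^ 2 := by nlinarith
  have hCsq0 : (0:ℝ) < C ^ 2 := by positivity
  set L := Real.log (2 * K / δ) with hLdef
  set B := Real.log (24 * C ^ 2 / Δ ^ 2) with hBdef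
  -- L ≥ log 8 = 3 log 2
  have hq8 : (8:ℝ) ≤ 2 * K / δ := by
    rw [le_div_iff₀ hδ1]; nlinarith
  have hlog8 : Real.log 8 = 3 * Real.log 2 := by
    rw [show (8:ℝ) = 2 ^ 3 by norm_num, Real.log_pow]; push_cast; ring
  have hL : 3 * Real.log 2 ≤ L := by
    rw [hLdef, ← hlog8]
    exact Real.log_le_log (by norm_num) hq8
  have hLpos : 0 < L := by nlinarith
  -- B ≥ 2, log B > 0
  have hA24 : (24:ℝ) ≤ 24 * C ^ 2 / Δ ^ 2 := by
    rw [le_div_iff₀ hΔsq]; nlinarith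
  have hA0 : (0:ℝ) < 24 * C ^ 2 / Δ ^ 2 := by linarith
  have hB2 : 2 ≤ B := by
    rw [hBdef, Real.le_log_iff_exp_le hA0]; linarith
  have hlogB : 0 < Real.log B := Real.log_pos (by linarith)
  -- t > 0
  have ht0 : 0 < t := by
    have h1 : 0 < 28 * C ^ 2 * L / Δ ^ 2 := div_pos (by nlinarith) hΔsq
    have h2 : 0 < 16 * C ^ 2 * Real.log B / Δ ^ 2 := div_pos (by nlinarith) hΔsq
    linarith
  set u := t * Δ ^ 2 / C ^ 2 with hudef
  have hu : 28 * L + 16 * Real.log B < u := by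
    have h' : (28 * C ^ 2 * L + 16 * C ^ 2 * Real.log B) / Δ ^ 2 < t := by
      rw [add_div]; exact ht
    have h'' := (div_lt_iff₀ hΔsq).mp h'
    rw [hudef, lt_div_iff₀ hCsq0]
    linarith [h'']
  have hu56 : 56 < u := by linarith
  have hu0 : 0 < u := by linarith
  have huC : u * C ^ 2 = t * Δ ^ 2 := by rw [hudef]; field_simp
  have hut : u ≤ t := by
    have h1 : u ≤ u * C ^ 2 := le_mul_of_one_le_right (le_of_lt hu0) hCsq1
    have h2 : t * Δ ^ 2 ≤ t * 1 := mul_le_mul_of_nonneg_left hΔsq1 ht0.le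
    rw [mul_one] at h2
    linarith
  have hlogu2 : 2 ≤ Real.log u := by
    rw [Real.le_log_iff_exp_le hu0]; linarith
  have hlogu0 : 0 < Real.log u := by linarith
  -- rewrite 2t
  have h2t : 2 * t = u * (24 * C ^ 2 / Δ ^ 2) / 12 := by
    rw [hudef]; field_simp; ring
  have hlog2t : Real.log (2 * t) = Real.log u + B - Real.log 12 := by
    rw [h2t, Real.log_div (by positivity) (by norm_num),
      Real.log_mul (ne_of_gt hu0) (ne_of_gt hA0), hBdef]
  have h2t1 : (1:ℝ) < 2 * t := by linarith
  have hlog2tpos : 0 < Real.log (2 * t) := Real.log_pos h2t1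
  have hlog12 : 1 < Real.log 12 := by
    rw [Real.lt_log_iff_exp_lt (by norm_num : (0:ℝ) < 12)]
    linarith
  -- the base-2 log
  set x := Real.logb 2 (2 * t) with hxdef
  have hx : x = Real.log (2 * t) / Real.log 2 := Real.log_div_log.symm
  have hxpos : 0 < x := by
    rw [hx]; exact div_pos hlog2tpos (by linarith)
  have hxlt : x < 2 * Real.log (2 * t) := by
    rw [hx, div_lt_iff₀ (by linarith : (0:ℝ) < Real.log 2)]
    nlinarith
  have hstep1 : Real.log x < Real.log 2 + Real.log (Real.log (2 * t)) := by
    have h := Real.log_lt_log hxpos hxlt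
    rwa [Real.log_mul (by norm_num) (ne_of_gt hlog2tpos)] at h
  -- log(2t) ≤ log u * B
  have hsum : Real.log (2 * t) ≤ Real.log u * B := by
    rw [hlog2t]
    nlinarith [mul_le_mul (by linarith : (1:ℝ) ≤ Real.log u - 1)
      (by linarith : (1:ℝ) ≤ B - 1) (by norm_num) (by linarith)]
  have hstep2 : Real.log (Real.log (2 * t)) ≤ Real.log (Real.log u) + Real.log B := by
    have h := Real.log_le_log hlog2tpos hsum
    rwa [Real.log_mul (ne_of_gt hlogu0) (by linarith : B ≠ 0)] at h
  -- tangent bounds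
  have htan1 : Real.log (Real.log u) ≤ Real.log u / 8 + Real.log 8 - 1 :=
    log_tangent_aux _ 8 hlogu0 (by norm_num)
  have htan2 : Real.log u ≤ u / 32 + Real.log 32 - 1 :=
    log_tangent_aux _ 32 hu0 (by norm_num)
  have hlog32 : Real.log 32 = 5 * Real.log 2 := by
    rw [show (32:ℝ) = 2 ^ 5 by norm_num, Real.log_pow]; push_cast; ring
  -- main inequality
  have hMlog : Real.log (2 * K * x ^ 2 / δ) = L + 2 * Real.log x := by
    rw [show 2 * K * x ^ 2 / δ = (2 * K / δ) * x ^ 2 by ring,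
      Real.log_mul (by positivity) (pow_ne_zero 2 (ne_of_gt hxpos)),
      Real.log_pow, hLdef]
    push_cast; ring
  have main : 4 * Real.log (2 * K * x ^ 2 / δ) < u := by
    rw [hMlog]
    rw [hlog8] at htan1
    rw [hlog32] at htan2
    linarith
  -- conclude
  have key : 4 * Real.log (2 * K * x ^ 2 / δ) / t < (Δ / C) ^ 2 := by
    rw [div_lt_iff₀ ht0]
    have heq : (Δ / C) ^ 2 * t = u := by rw [hudef]; field_simp
    rw [heq]; exact main
  have hΔC : 0 < Δ / C := div_pos hΔ1 (by linarith)
  have hs := (Real.sqrt_lt' hΔC).mpr key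
  calc C * Real.sqrt (4 * Real.log (2 * K * x ^ 2 / δ) / t)
      < C * (Δ / C) := mul_lt_mul_of_pos_left hs (by linarith)
    _ = Δ := by field_simp
end

section
/- In the setting of the optimistic/pessimistic value functions with the true kernel contained in every confidence set 𝒞_h^t(s,a), and with ‖p̄ − p‖₁ ≤ 2·sqrt( β_h^t(s,a) ) for any two members p̄, p of 𝒞_h^t(s,a) (e.g. via Pinsker from a KL-radius β_h^t(s,a)), the gap between the optimistic Q-value and the pessimistic Q-value along the optimistic policy π̄^t satisfies the recursion: Q̄_h^t(s,a) − Q̲_h^{t,π̄^t}(s,a) ≤ 4(H−h)·min{ sqrt(β_h^t(s,a)), 1 } + Σ_{s'} p_h(s'|s,a)·( V̄_{h+1}^t(s') − V̲_{h+1}^{t,π̄^t}(s') ). -/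
/-- One step of the optimistic/pessimistic gap recursion.  If the
transition kernels `pbar` (optimizer for the optimistic value) and `plow` (optimizer for the
pessimistic value) both deviate from the true kernel `p` by at most `2·min{sqrt β, 1}` in
ℓ₁-norm, and the continuation values are bounded in `[0, H − h]`, then
`Q̄_h(s,a) − Q̲_h^{π̄}(s,a) ≤ 4(H−h)·min{sqrt β, 1} + Σ_{s'} p(s')·(V̄_{h+1}(s') − V̲_{h+1}(s'))`. -/
theorem stmt_10 {S : Type*} [Fintype S]
    (H h : ℕ) (hh : h ≤ H)
    (r β : ℝ) (hβ : 0 ≤ β)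
    (p pbar plow : S → ℝ)
    (Vbar Vlow : S → ℝ)
    (hp0 : ∀ s', 0 ≤ p s') (hp1 : ∑ s', p s' = 1)
    (hVbar0 : ∀ s', 0 ≤ Vbar s') (hVbar1 : ∀ s', Vbar s' ≤ (H : ℝ) - h)
    (hVlow0 : ∀ s', 0 ≤ Vlow s') (hVlow1 : ∀ s', Vlow s' ≤ (H : ℝ) - h)
    (hl1bar : ∑ s', |pbar s' - p s'| ≤ 2 * min (Real.sqrt β) 1)
    (hl1low : ∑ s', |plow s' - p s'| ≤ 2 * min (Real.sqrt β) 1)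
    (Qbar Qlow : ℝ)
    (hQbar : Qbar = r + ∑ s', pbar s' * Vbar s')
    (hQlow : Qlow = r + ∑ s', plow s' * Vlow s') :
    Qbar - Qlow ≤ 4 * ((H : ℝ) - h) * min (Real.sqrt β) 1
      + ∑ s', p s' * (Vbar s' - Vlow s') := by
  have hHh : (0:ℝ) ≤ (H : ℝ) - h := by
    have : (h:ℝ) ≤ H := Nat.cast_le.mpr hh
    linarith
  have key : ∀ (q V : S → ℝ), (∀ s', 0 ≤ V s') → (∀ s', V s' ≤ (H:ℝ) - h) →
      (∑ s', |q s' - p s'| ≤ 2 * min (Real.sqrt β) 1) →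
      |∑ s', (q s' - p s') * V s'| ≤ 2 * ((H:ℝ) - h) * min (Real.sqrt β) 1 := by
    intro q V hV0 hV1 hl1
    calc |∑ s', (q s' - p s') * V s'| ≤ ∑ s', |(q s' - p s') * V s'| :=
          Finset.abs_sum_le_sum_abs _ _
      _ ≤ ∑ s', |q s' - p s'| * ((H:ℝ) - h) := by
          apply Finset.sum_le_sum
          intro i _
          rw [abs_mul]
          exact mul_le_mul_of_nonneg_left
            (by rw [abs_of_nonneg (hV0 i)]; exact hV1 i) (abs_nonneg _)
      _ = (∑ s', |q s' - p s'|) * ((H:ℝ) - h) := by rw [Finset.sum_mul]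
      _ ≤ (2 * min (Real.sqrt β) 1) * ((H:ℝ) - h) := by
          exact mul_le_mul_of_nonneg_right hl1 hHh
      _ = 2 * ((H:ℝ) - h) * min (Real.sqrt β) 1 := by ring
  have h1 := key pbar Vbar hVbar0 hVbar1 hl1bar
  have h2 := key plow Vlow hVlow0 hVlow1 hl1low
  have hdecomp : Qbar - Qlow =
      (∑ s', (pbar s' - p s') * Vbar s') - (∑ s', (plow s' - p s') * Vlow s')
        + ∑ s', p s' * (Vbar s' - Vlow s') := by
    subst hQbar hQlow
    have key2 : (∑ s', pbar s' * Vbar s') - ∑ s', plow s' * Vlow s' =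
        (∑ s', (pbar s' - p s') * Vbar s') - (∑ s', (plow s' - p s') * Vlow s')
          + ∑ s', p s' * (Vbar s' - Vlow s') := by
      rw [← Finset.sum_sub_distrib, ← Finset.sum_sub_distrib, ← Finset.sum_add_distrib]
      exact Finset.sum_congr rfl fun i _ => by ring
    linarith
  rw [hdecomp]
  obtain ⟨_, h1b⟩ := abs_le.mp h1
  obtain ⟨h2a, _⟩ := abs_le.mp h2
  linarith
end
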